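/- arXiv:1402.6459 — 2 statements merged into one kernel-verified Lean document; each statement's English description precedes it below -/
import Mathlib

section
/- The asynchronous execution relation ⇒, defined by P ⇒ Q iff ⌈P⌉ₐ ⊸ ⌈Q⌉ₐ is MLL-provable under some variable instantiation, is reflexive and transitive, contains the one-step execution relation →, and is closed under prefixing: if P ⇒ Q then a.P ⇒ a.Q. -/
/-! Multiplicative CCS (MCCS): processes with located action prefixes.
`act true a ℓ P` is the positive prefix `a^ℓ.P`, `act false a ℓ P` is `ā^ℓ.P`. -/
inductive Proc : Type where
  | one : Proc
  | par : Proc → Proc → Proc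
  | act : Bool → ℕ → ℕ → Proc → Proc

namespace Proc

/-- The list of locations occurring in a term. -/
def locList : Proc → List ℕ
  | one => []
  | par P Q => P.locList ++ Q.locList
  | act _ _ ℓ P => ℓ :: P.locList

/-- The set of locations occurring in a term. -/
def locs (P : Proc) : Finset ℕ := P.locList.toFinset

/-- Well-formed: each location occurs at most once. -/
def WF (P : Proc) : Prop := P.locList.Nodup

/-- The subject (channel name) of a location. -/
def subj : Proc → ℕ → Option ℕ
  | one, _ => none
  | par P Q, ℓ => (P.subj ℓ).orElse (fun _ => Q.subj ℓ)
  | act _ a m P, ℓ => if ℓ = m then some a else P.subj ℓ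

/-- The polarity of a location (`true` = positive). -/
def pol : Proc → ℕ → Option Bool
  | one, _ => none
  | par P Q, ℓ => (P.pol ℓ).orElse (fun _ => Q.pol ℓ)
  | act b _ m P, ℓ => if ℓ = m then some b else P.pol ℓ

/-- The (strict) action / prefixing order of a term: `plt P ℓ m` iff the
prefix at `ℓ` guards the one at `m`. -/
inductive plt : Proc → ℕ → ℕ → Prop where
  | parL {P Q ℓ m} : plt P ℓ m → plt (par P Q) ℓ m
  | parR {P Q ℓ m} : plt Q ℓ m → plt (par P Q) ℓ m
  | here {b a ℓ m P} : m ∈ P.locs → plt (act b a ℓ P) ℓ m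
  | under {b a n P ℓ m} : plt P ℓ m → plt (act b a n P) ℓ m

/-- Number of action prefixes. -/
def size : Proc → ℕ
  | one => 0
  | par P Q => P.size + Q.size
  | act _ _ _ P => P.size + 1

end Proc

/-- Structural congruence: smallest congruence making `par` commutative,
associative, with `one` as neutral element. -/
inductive SC : Proc → Proc → Prop where
  | refl (P) : SC P P
  | symm {P Q} : SC P Q → SC Q P
  | trans {P Q R} : SC P Q → SC Q R → SC P R
  | parComm (P Q) : SC (.par P Q) (.par Q P)
  | parAssoc (P Q R) : SC (.par (.par P Q) R) (.par P (.par Q R))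
  | parUnit (P) : SC (.par .one P) P
  | parCong {P P' Q Q'} : SC P P' → SC Q Q' → SC (.par P Q) (.par P' Q')
  | actCong (b a ℓ) {P Q} : SC P Q → SC (.act b a ℓ P) (.act b a ℓ Q)

/-- One execution step, labelled by the pair (positive location, negative location)
of the two synchronised prefixes; defined on structural congruence classes. -/
def Step (P : Proc) (p : ℕ × ℕ) (Q : Proc) : Prop :=
  ∃ a P₁ Q₁ R,
    SC P (.par (.act true a p.1 P₁) (.par (.act false a p.2 Q₁) R)) ∧
    SC Q (.par P₁ (.par Q₁ R))

/-- Execution sequences, annotated by the list of synchronisation pairs. -/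
inductive ExecL : Proc → List (ℕ × ℕ) → Proc → Prop where
  | refl {P Q} : SC P Q → ExecL P [] Q
  | step {P p Q l R} : Step P p Q → ExecL Q l R → ExecL P (p :: l) R

/-- The domain of a pairing (set of paired locations). -/
def pdom (c : Finset (ℕ × ℕ)) : Finset ℕ := c.image Prod.fst ∪ c.image Prod.snd

/-- A pairing of `P`: a partial involution on locations of `P`,
represented as a set of (positive location, negative location) pairs with
matching subjects, opposite polarities and pairwise disjoint components. -/
def IsPairing (P : Proc) (c : Finset (ℕ × ℕ)) : Prop :=
  (∀ p ∈ c, P.pol p.1 = some true ∧ P.pol p.2 = some false ∧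
      P.subj p.1 = P.subj p.2 ∧ (P.subj p.1).isSome) ∧
  (∀ p ∈ c, ∀ q ∈ c, p ≠ q → p.1 ≠ q.1 ∧ p.2 ≠ q.2 ∧ p.1 ≠ q.2)

/-- The equivalence relation `∼_c` generated by a pairing `c`. -/
def peqv (c : Finset (ℕ × ℕ)) : ℕ → ℕ → Prop :=
  Relation.EqvGen (fun x y => (x, y) ∈ c ∨ (y, x) ∈ c)

/-- The relation `∼_c ∘ <_P ∘ ∼_c`. -/
def consRel (P : Proc) (c : Finset (ℕ × ℕ)) (x y : ℕ) : Prop :=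
  ∃ u v, peqv c x u ∧ P.plt u v ∧ peqv c v y

/-- A relation is acyclic if it has no (transitive) cycle. -/
def Acyclic (r : ℕ → ℕ → Prop) : Prop := ∀ x, ¬ Relation.TransGen r x x

/-- The domain of `c` is downward closed for the action order of `P`. -/
def DownClosed (P : Proc) (c : Finset (ℕ × ℕ)) : Prop :=
  ∀ ℓ m, P.plt ℓ m → m ∈ pdom c → ℓ ∈ pdom c

/-- Consistency of a pairing. -/
def Consistent (P : Proc) (c : Finset (ℕ × ℕ)) : Prop :=
  DownClosed P c ∧ Acyclic (consRel P c)

/-! MLL with actions (MLLa). -/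

inductive Form : Type where
  | pv : ℕ → Form
  | nv : ℕ → Form
  | tens : Form → Form → Form
  | parr : Form → Form → Form
  | modp : ℕ → Form → Form
  | modn : ℕ → Form → Form

namespace Form

def dual : Form → Form
  | pv α => nv α
  | nv α => pv α
  | tens A B => parr A.dual B.dual
  | parr A B => tens A.dual B.dual
  | modp a A => modn a A.dual
  | modn a A => modp a A.dual

/-- Instantiation of propositional variables. -/
def subst (σ : ℕ → Form) : Form → Form
  | pv α => σ α
  | nv α => (σ α).dual
  | tens A B => tens (A.subst σ) (B.subst σ)
  | parr A B => parr (A.subst σ) (B.subst σ)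
  | modp a A => modp a (A.subst σ)
  | modn a A => modn a (A.subst σ)

end Form

/-- Sequent-calculus provability for MLLa.  `Prov true` allows the modality
rules; `Prov false` is pure MLL (axiom, cut, ⊗, ⅋, exchange only). -/
inductive Prov : Bool → List Form → Prop where
  | ax (b A) : Prov b [Form.dual A, A]
  | cut {b A Γ Δ} : Prov b (A :: Γ) → Prov b (A.dual :: Δ) → Prov b (Γ ++ Δ)
  | tens {b A B Γ Δ} : Prov b (A :: Γ) → Prov b (B :: Δ) →
      Prov b (Form.tens A B :: (Γ ++ Δ))
  | parr {b A B Γ} : Prov b (A :: B :: Γ) → Prov b (Form.parr A B :: Γ)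
  | exch {b Γ Δ} : Prov b Γ → Γ.Perm Δ → Prov b Δ
  | modp {A Γ} (a) : Prov true (A :: Γ) → Prov true (Form.modp a A :: Γ)
  | modn {A Γ} (a) : Prov true (A :: Γ) → Prov true (Form.modn a A :: Γ)

/-- Synchronous type assignment (with a fresh-variable counter):
`tSA P n = (⌈P⌉ₛ, n')` using variables `n, …, n'-1`, each exactly once
positively and once negatively. -/
def tSA : Proc → ℕ → Form × ℕ
  | .one, n => (.parr (.nv n) (.pv n), n + 1)
  | .par P Q, n =>
      let r := tSA P n
      let s := tSA Q r.2
      (.tens r.1 s.1, s.2)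
  | .act true a _ P, n =>
      let r := tSA P (n + 1)
      (.modp a (.parr (.nv n) (.tens r.1 (.pv n))), r.2)
  | .act false a _ P, n =>
      let r := tSA P (n + 1)
      (.parr (.modn a (.tens r.1 (.nv n))) (.pv n), r.2)

/-- Asynchronous type assignment. -/
def tAA : Proc → ℕ → Form × ℕ
  | .one, n => (.parr (.nv n) (.pv n), n + 1)
  | .par P Q, n =>
      let r := tAA P n
      let s := tAA Q r.2
      (.tens r.1 s.1, s.2)
  | .act true a _ P, n =>
      let r := tAA P (n + 1)
      (.parr (.modp a (.nv n)) (.tens r.1 (.pv n)), r.2)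
  | .act false a _ P, n =>
      let r := tAA P (n + 1)
      (.parr (.tens r.1 (.nv n)) (.modn a (.pv n)), r.2)

def tS (P : Proc) : Form := (tSA P 0).1

def tA (P : Proc) : Form := (tAA P 0).1

/-- `⌈P⌉ₛ ⊸ ⌈Q⌉ₛ` is provable in pure MLL for some instantiation of the
propositional variables of `⌈P⌉ₛ` (the variables of the two translations
are chosen disjoint). -/
def SImp (P Q : Proc) : Prop :=
  ∃ σ : ℕ → Form,
    Prov false [Form.parr (((tSA P 0).1.subst σ)).dual (tSA Q (tSA P 0).2).1]

/-- Asynchronous version: `⌈P⌉ₐ ⊸ ⌈Q⌉ₐ` provable in pure MLL under some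
instantiation of the variables of `⌈P⌉ₐ`. -/
def AImp (P Q : Proc) : Prop :=
  ∃ σ : ℕ → Form,
    Prov false [Form.parr (((tAA P 0).1.subst σ)).dual (tAA Q (tAA P 0).2).1]

/-- Cut-free MLLa proof trees. -/
inductive CF : List Form → Type where
  | ax (A) : CF [Form.dual A, A]
  | tens {A B Γ Δ} : CF (Γ ++ [A]) → CF (B :: Δ) → CF (Γ ++ Form.tens A B :: Δ)
  | parr {A B Γ Δ} : CF (Γ ++ A :: B :: Δ) → CF (Γ ++ Form.parr A B :: Δ)
  | modp {A Γ Δ} (a) : CF (Γ ++ A :: Δ) → CF (Γ ++ Form.modp a A :: Δ)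
  | modn {A Γ Δ} (a) : CF (Γ ++ A :: Δ) → CF (Γ ++ Form.modn a A :: Δ)

namespace Form

theorem dual_dual (A : Form) : A.dual.dual = A := by
  induction A <;> simp [dual, *]

theorem subst_dual (σ : ℕ → Form) (A : Form) : (A.dual).subst σ = (A.subst σ).dual := by
  induction A <;> simp [dual, subst, dual_dual, *]

theorem subst_subst (σ τ : ℕ → Form) (A : Form) :
    (A.subst σ).subst τ = A.subst (fun k => (σ k).subst τ) := by
  induction A <;> simp [subst, subst_dual, *]

/-- variables occurring in a formula -/
def vars : Form → Finset ℕ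
  | pv a => {a}
  | nv a => {a}
  | tens A B => A.vars ∪ B.vars
  | parr A B => A.vars ∪ B.vars
  | modp _ A => A.vars
  | modn _ A => A.vars

theorem subst_congr {σ τ : ℕ → Form} {A : Form} (h : ∀ k ∈ A.vars, σ k = τ k) :
    A.subst σ = A.subst τ := by
  induction A with
  | pv a => exact h a (by simp [vars])
  | nv a => simp [subst, h a (by simp [vars])]
  | tens A B ihA ihB =>
      simp only [vars, Finset.mem_union] at h
      simp [subst, ihA fun k hk => h k (Or.inl hk), ihB fun k hk => h k (Or.inr hk)]
  | parr A B ihA ihB =>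
      simp only [vars, Finset.mem_union] at h
      simp [subst, ihA fun k hk => h k (Or.inl hk), ihB fun k hk => h k (Or.inr hk)]
  | modp a A ih => simp only [vars] at h; simp [subst, ih h]
  | modn a A ih => simp only [vars] at h; simp [subst, ih h]

theorem subst_congr_all {σ τ : ℕ → Form} (A : Form) (h : ∀ k, σ k = τ k) :
    A.subst σ = A.subst τ := subst_congr (fun k _ => h k)

end Form

/-- shift substitution -/
def shv (d : ℕ) : ℕ → Form := fun k => .pv (k + d)

theorem prov_subst {b : Bool} {Γ : List Form} (σ : ℕ → Form) (h : Prov b Γ) :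
    Prov b (Γ.map (Form.subst σ)) := by
  induction h with
  | ax b A =>
      simpa [Form.subst_dual] using Prov.ax b (A.subst σ)
  | cut h1 h2 ih1 ih2 =>
      rw [List.map_append]
      exact Prov.cut ih1 (by simpa [Form.subst_dual] using ih2)
  | tens h1 h2 ih1 ih2 =>
      simpa [Form.subst] using Prov.tens (by simpa using ih1) (by simpa using ih2)
  | parr h ih => simpa [Form.subst] using Prov.parr (by simpa using ih)
  | exch h p ih => exact Prov.exch ih (p.map _)
  | modp a h ih => exact Prov.modp a (by simpa using ih)
  | modn a h ih => exact Prov.modn a (by simpa using ih)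

/-- linear implication as a two-formula sequent -/
def Lin (A B : Form) : Prop := Prov false [A.dual, B]

namespace Lin

theorem refl (A : Form) : Lin A A := Prov.ax false A

theorem subst {A B : Form} (σ : ℕ → Form) (h : Lin A B) :
    Lin (A.subst σ) (B.subst σ) := by
  have := prov_subst σ h
  simpa [Lin, Form.subst_dual] using this

theorem trans {A B C : Form} (h1 : Lin A B) (h2 : Lin B C) : Lin A C := by
  have h1' : Prov false (B :: [A.dual]) := Prov.exch h1 (List.Perm.swap _ _ _)
  exact Prov.cut h1' h2

theorem tens {A A' B B' : Form} (h1 : Lin A A') (h2 : Lin B B') :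
    Lin (.tens A B) (.tens A' B') := by
  have t : Prov false (Form.tens A' B' :: ([A.dual] ++ [B.dual])) :=
    Prov.tens (Prov.exch h1 (List.Perm.swap _ _ _)) (Prov.exch h2 (List.Perm.swap _ _ _))
  have p : Prov false [A.dual, B.dual, Form.tens A' B'] :=
    Prov.exch t (List.perm_append_singleton _ _).symm
  exact Prov.parr p

theorem tens_comm {A A' B B' : Form} (h1 : Lin A B') (h2 : Lin B A') :
    Lin (.tens A B) (.tens A' B') := by
  have t : Prov false (Form.tens A' B' :: ([B.dual] ++ [A.dual])) :=
    Prov.tens (Prov.exch h2 (List.Perm.swap _ _ _)) (Prov.exch h1 (List.Perm.swap _ _ _))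
  have p : Prov false [A.dual, B.dual, Form.tens A' B'] :=
    Prov.exch t (((List.perm_append_singleton _ _).symm).trans (List.Perm.swap _ _ _))
  exact Prov.parr p

theorem parr {A A' B B' : Form} (h1 : Lin A A') (h2 : Lin B B') :
    Lin (.parr A B) (.parr A' B') := by
  have t : Prov false (Form.tens A.dual B.dual :: ([A'] ++ [B'])) :=
    Prov.tens h1 h2
  have p : Prov false (A' :: B' :: [Form.tens A.dual B.dual]) :=
    Prov.exch t (List.perm_append_singleton _ _).symm
  have q : Prov false (Form.parr A' B' :: [Form.tens A.dual B.dual]) := Prov.parr p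
  exact Prov.exch q (List.Perm.swap _ _ _)

end Lin
/-- rotate head to back -/
theorem prov_rot {b Γ} {A : Form} (h : Prov b (A :: Γ)) : Prov b (Γ ++ [A]) :=
  Prov.exch h (List.perm_append_singleton _ _).symm

theorem prov_unrot {b Γ} {A : Form} (h : Prov b (Γ ++ [A])) : Prov b (A :: Γ) :=
  Prov.exch h (List.perm_append_singleton _ _)

/-- parr inversion via cut -/
theorem prov_unparr {A B : Form} (h : Prov false [Form.parr A B]) :
    Prov false [A, B] := by
  have hax : Prov false ((Form.parr A B).dual :: [A, B]) := by
    show Prov false (Form.tens A.dual B.dual :: [A, B])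
    have := Prov.tens (b := false) (Prov.ax _ A) (Prov.ax _ B)
    exact this
  have := Prov.cut h hax
  simpa using this

theorem lin_of_imp {A B : Form} (h : Prov false [Form.parr A.dual B]) : Lin A B :=
  prov_unparr h

theorem imp_of_lin {A B : Form} (h : Lin A B) : Prov false [Form.parr A.dual B] :=
  Prov.parr h

/-- (A ⊗ B) ⊗ C ⊸ A ⊗ (B ⊗ C) -/
theorem lin_assoc1 (A B C : Form) :
    Lin (.tens (.tens A B) C) (.tens A (.tens B C)) := by
  show Prov false [Form.parr (Form.parr A.dual B.dual) C.dual, _]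
  have hbc : Prov false (Form.tens B C :: ([B.dual] ++ [C.dual])) :=
    Prov.tens (Prov.exch (Prov.ax _ B) (List.Perm.swap _ _ _))
      (Prov.exch (Prov.ax _ C) (List.Perm.swap _ _ _))
  have ht : Prov false (Form.tens A (Form.tens B C) :: ([A.dual] ++ [B.dual, C.dual])) :=
    Prov.tens (Prov.exch (Prov.ax _ A) (List.Perm.swap _ _ _)) hbc
  have h1 : Prov false (A.dual :: B.dual :: C.dual :: [Form.tens A (Form.tens B C)]) :=
    Prov.exch ht (List.perm_append_singleton _ _).symm
  have h2 : Prov false (Form.parr A.dual B.dual :: C.dual :: [Form.tens A (Form.tens B C)]) :=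
    Prov.parr h1
  exact Prov.parr h2

/-- A ⊗ (B ⊗ C) ⊸ (A ⊗ B) ⊗ C -/
theorem lin_assoc2 (A B C : Form) :
    Lin (.tens A (.tens B C)) (.tens (.tens A B) C) := by
  show Prov false [Form.parr A.dual (Form.parr B.dual C.dual), _]
  have hab : Prov false (Form.tens A B :: ([A.dual] ++ [B.dual])) :=
    Prov.tens (Prov.exch (Prov.ax _ A) (List.Perm.swap _ _ _))
      (Prov.exch (Prov.ax _ B) (List.Perm.swap _ _ _))
  have ht : Prov false (Form.tens (Form.tens A B) C :: ([A.dual, B.dual] ++ [C.dual])) :=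
    Prov.tens hab (Prov.exch (Prov.ax _ C) (List.Perm.swap _ _ _))
  have h1 : Prov false (A.dual :: B.dual :: C.dual :: [Form.tens (Form.tens A B) C]) :=
    Prov.exch ht (List.perm_append_singleton _ _).symm
  have h2 : Prov false (B.dual :: C.dual :: [Form.tens (Form.tens A B) C]) →
      Prov false (Form.parr B.dual C.dual :: [Form.tens (Form.tens A B) C]) := Prov.parr
  have h3 : Prov false (A.dual :: Form.parr B.dual C.dual :: [Form.tens (Form.tens A B) C]) := by
    -- reorder h1 : A⊥ :: B⊥ :: C⊥ :: [t]  we need parr under A⊥; use exch to bring A⊥ last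
    have h1' : Prov false (B.dual :: C.dual :: [Form.tens (Form.tens A B) C] ++ [A.dual]) :=
      prov_rot h1
    have h2' := Prov.parr h1'
    -- h2' : parr B⊥ C⊥ :: [t] ++ [A⊥]  = [parr, t, A⊥]
    exact Prov.exch h2' (by
      refine List.Perm.trans ?_ (List.Perm.swap _ _ _)
      exact List.Perm.cons _ (List.Perm.swap _ _ _))
  exact Prov.parr h3

/-- (Y ⅋ Y⊥) ⊗ Y ⊸ Y -/
theorem lin_unit1 (Y : Form) : Lin (.tens (.parr Y Y.dual) Y) Y := by
  show Prov false [Form.parr (Form.tens Y.dual Y.dual.dual) Y.dual, Y]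
  rw [Form.dual_dual]
  have ht : Prov false (Form.tens Y.dual Y :: ([Y] ++ [Y.dual])) :=
    Prov.tens (Prov.ax _ Y)
      (by simpa [Form.dual_dual] using Prov.ax false Y.dual)
  have h1 : Prov false (Form.tens Y.dual Y :: Y.dual :: [Y]) :=
    Prov.exch ht (List.Perm.cons _ (List.Perm.swap _ _ _))
  have h2 : Prov false (Form.parr (Form.tens Y.dual Y) Y.dual :: [Y]) := Prov.parr h1
  exact h2

/-- X ⊸ (nv t ⅋ pv t) ⊗ X -/
theorem lin_unit2 (t : ℕ) (X : Form) : Lin X (.tens (.parr (.nv t) (.pv t)) X) := by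
  have hp : Prov false [Form.parr (Form.nv t) (Form.pv t)] :=
    Prov.parr (Prov.ax _ (Form.pv t))
  have ht : Prov false (Form.tens (Form.parr (Form.nv t) (Form.pv t)) X :: ([] ++ [X.dual])) :=
    Prov.tens hp (Prov.exch (Prov.ax _ X) (List.Perm.swap _ _ _))
  exact Prov.exch ht (List.Perm.swap _ _ _)
/-- the key synchronisation step, at the formula level -/
theorem lin_sync (a : ℕ) (X Y Z : Form) :
    Lin (.tens (.parr (.modp a X) (.tens X X.dual))
          (.tens (.parr (.tens Y X) (.modn a X.dual)) Z))
        (.tens X (.tens Y Z)) := by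
  show Prov false
    [Form.parr (Form.tens (.modn a X.dual) (.parr X.dual X.dual.dual))
      (Form.parr (Form.tens (.parr Y.dual X.dual) (.modp a X.dual.dual)) Z.dual),
     Form.tens X (Form.tens Y Z)]
  rw [Form.dual_dual]
  set T1 := Form.tens (.modn a X.dual) (.parr X.dual X) with hT1
  set T2 := Form.tens (.parr Y.dual X.dual) (.modp a X) with hT2
  set W := Form.tens X (Form.tens Y Z) with hW
  have hax1 : Prov false (X :: [X.dual]) := by
    simpa [Form.dual_dual] using Prov.ax false X.dual
  have hYZ : Prov false (Form.tens Y Z :: ([Y.dual] ++ [Z.dual])) :=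
    Prov.tens (Prov.exch (Prov.ax _ Y) (List.Perm.swap _ _ _))
      (Prov.exch (Prov.ax _ Z) (List.Perm.swap _ _ _))
  have hw : Prov false (W :: ([X.dual] ++ [Y.dual, Z.dual])) := Prov.tens hax1 hYZ
  have h5 : Prov false (Y.dual :: X.dual :: [Z.dual, W]) :=
    Prov.exch hw (((List.perm_append_singleton _ _).symm).trans (List.Perm.swap _ _ _))
  have h4 : Prov false (Form.parr Y.dual X.dual :: [Z.dual, W]) := Prov.parr h5
  have haxm : Prov false (Form.modp a X :: [Form.modn a X.dual]) :=
    Prov.exch (Prov.ax false (Form.modp a X)) (List.Perm.swap _ _ _)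
  have h3 : Prov false (T2 :: ([Z.dual, W] ++ [Form.modn a X.dual])) := Prov.tens h4 haxm
  have h2 : Prov false (Form.modn a X.dual :: [T2, Z.dual, W]) :=
    Prov.exch h3 (List.perm_append_singleton _ ([T2, Z.dual, W]))
  have haxp : Prov false (Form.parr X.dual X :: ([] : List Form)) := Prov.parr (Prov.ax _ X)
  have h1 : Prov false (T1 :: ([T2, Z.dual, W] ++ [])) := Prov.tens h2 haxp
  have h1' : Prov false [T1, T2, Z.dual, W] := by simpa using h1
  have g0 : Prov false (T2 :: Z.dual :: [W, T1]) :=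
    Prov.exch h1' (List.perm_append_singleton _ _).symm
  have g1 : Prov false (Form.parr T2 Z.dual :: [W, T1]) := Prov.parr g0
  have g2 : Prov false (T1 :: Form.parr T2 Z.dual :: [W]) :=
    Prov.exch g1 (List.perm_append_singleton T1 [Form.parr T2 Z.dual, W])
  exact Prov.parr g2
theorem tAA_add (P : Proc) : ∀ m d,
    (tAA P (m + d)).1 = ((tAA P m).1).subst (shv d) ∧
    (tAA P (m + d)).2 = (tAA P m).2 + d := by
  induction P with
  | one =>
      intro m d
      refine ⟨?_, by simp [tAA]; omega⟩
      simp [tAA, Form.subst, shv, Form.dual]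
  | par P Q ihP ihQ =>
      intro m d
      have hP := ihP m d
      have hQ := ihQ (tAA P m).2 d
      simp only [tAA]
      rw [hP.2]
      exact ⟨by simp [Form.subst, hP.1, hQ.1], hQ.2⟩
  | act b c ℓ P ihP =>
      intro m d
      have hP := ihP (m + 1) d
      have e : m + d + 1 = m + 1 + d := by omega
      cases b
      · simp only [tAA, e, hP.1, hP.2]
        exact ⟨by simp [Form.subst, shv, Form.dual], trivial⟩
      · simp only [tAA, e, hP.1, hP.2]
        exact ⟨by simp [Form.subst, shv, Form.dual], trivial⟩

theorem tAA_fst_add (P : Proc) (m d : ℕ) :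
    (tAA P (m + d)).1 = ((tAA P m).1).subst (shv d) := (tAA_add P m d).1

theorem tAA_snd_add (P : Proc) (m d : ℕ) :
    (tAA P (m + d)).2 = (tAA P m).2 + d := (tAA_add P m d).2

theorem tAA_snd (P : Proc) (m : ℕ) : (tAA P m).2 = (tAA P 0).2 + m := by
  simpa using tAA_snd_add P 0 m

theorem tAA_vars (P : Proc) : ∀ m, ∀ k ∈ ((tAA P m).1).vars, m ≤ k ∧ k < (tAA P m).2 := by
  induction P with
  | one =>
      intro m k hk
      simp only [tAA, Form.vars, Finset.union_idempotent, Finset.mem_singleton] at hk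
      subst hk; simp [tAA]
  | par P Q ihP ihQ =>
      intro m k hk
      simp only [tAA, Form.vars, Finset.mem_union] at hk
      have h1 : m ≤ (tAA P m).2 := by rw [tAA_snd]; omega
      have h2 : (tAA P m).2 ≤ (tAA Q (tAA P m).2).2 := by rw [tAA_snd Q]; omega
      rcases hk with hk | hk
      · have := ihP m k hk
        simp only [tAA]
        exact ⟨this.1, lt_of_lt_of_le this.2 h2⟩
      · have := ihQ (tAA P m).2 k hk
        simp only [tAA]
        exact ⟨le_trans h1 this.1, this.2⟩
  | act b c ℓ P ihP =>
      intro m k hk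
      have h1 : m + 1 ≤ (tAA P (m + 1)).2 := by rw [tAA_snd]; omega
      cases b
      · simp only [tAA, Form.vars, Finset.mem_union, Finset.mem_singleton] at hk ⊢
        rcases hk with (hk | hk) | hk
        · have := ihP (m + 1) k hk; exact ⟨by omega, this.2⟩
        · exact ⟨by omega, by omega⟩
        · exact ⟨by omega, by omega⟩
      · simp only [tAA, Form.vars, Finset.mem_union, Finset.mem_singleton] at hk ⊢
        rcases hk with hk | (hk | hk)
        · exact ⟨by omega, by omega⟩
        · have := ihP (m + 1) k hk; exact ⟨by omega, this.2⟩
        · exact ⟨by omega, by omega⟩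

/-- if σ acts as a shift on the variables of `tAA P m`, then substitution shifts -/
theorem subst_tAA_shift {σ : ℕ → Form} (P : Proc) (m d : ℕ)
    (h : ∀ k, m ≤ k → k < (tAA P m).2 → σ k = .pv (k + d)) :
    ((tAA P m).1).subst σ = (tAA P (m + d)).1 := by
  rw [tAA_fst_add]
  exact Form.subst_congr fun k hk => by
    have := tAA_vars P m k hk
    exact h k this.1 this.2
theorem aimp_of_lin {P Q : Proc} {σ : ℕ → Form}
    (h : Lin ((tAA P 0).1.subst σ) ((tAA Q (tAA P 0).2).1)) : AImp P Q :=
  ⟨σ, imp_of_lin h⟩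

theorem aimp_lin {P Q : Proc} (h : AImp P Q) :
    ∃ σ, Lin ((tAA P 0).1.subst σ) ((tAA Q (tAA P 0).2).1) := by
  obtain ⟨σ, hp⟩ := h
  exact ⟨σ, lin_of_imp hp⟩

theorem subst_shv_tAA (P : Proc) (m d : ℕ) :
    ((tAA P m).1).subst (shv d) = (tAA P (m + d)).1 :=
  subst_tAA_shift P m d (fun _ _ _ => rfl)

theorem aimp_refl (P : Proc) : AImp P P := by
  apply aimp_of_lin (σ := shv (tAA P 0).2)
  rw [subst_shv_tAA P 0 (tAA P 0).2]
  simp only [Nat.zero_add]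
  exact Lin.refl _

theorem aimp_trans {P Q R : Proc} (h1 : AImp P Q) (h2 : AImp Q R) : AImp P R := by
  obtain ⟨σ₁, h₁⟩ := aimp_lin h1
  obtain ⟨σ₂, h₂⟩ := aimp_lin h2
  set n := (tAA P 0).2 with hn
  set m := (tAA Q 0).2 with hm
  -- move the R side from offset m to offset n
  have h₂' := Lin.subst (fun k => Form.pv (k + n - m)) h₂
  rw [Form.subst_subst] at h₂'
  have hR : ((tAA R m).1).subst (fun k => Form.pv (k + n - m)) = (tAA R n).1 := by
    have e1 : (tAA R m).1 = ((tAA R 0).1).subst (shv m) := by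
      simpa using tAA_fst_add R 0 m
    rw [e1, Form.subst_subst]
    have e2 : ((tAA R 0).1).subst (fun k => (shv m k).subst (fun k => Form.pv (k + n - m)))
        = ((tAA R 0).1).subst (shv n) := by
      apply Form.subst_congr_all
      intro k
      simp only [shv, Form.subst]
      congr 1
      omega
    rw [e2]
    simpa using (tAA_fst_add R 0 n).symm
  rw [hR] at h₂'
  -- now adapt h₁ so that its Q side matches
  set σ₂' : ℕ → Form := fun k => (σ₂ k).subst (fun k => Form.pv (k + n - m)) with hσ₂'
  have h₁' := Lin.subst (fun k => σ₂' (k - n)) h₁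
  rw [Form.subst_subst] at h₁'
  have hQ : ((tAA Q n).1).subst (fun k => σ₂' (k - n)) = ((tAA Q 0).1).subst σ₂' := by
    have e1 : (tAA Q n).1 = ((tAA Q 0).1).subst (shv n) := by
      simpa using tAA_fst_add Q 0 n
    rw [e1, Form.subst_subst]
    apply Form.subst_congr_all
    intro k
    simp only [shv, Form.subst]
    congr 1
    omega
  rw [hQ] at h₁'
  exact aimp_of_lin (Lin.trans h₁' h₂')
theorem aimp_par {P P' Q Q' : Proc} (h1 : AImp P P') (h2 : AImp Q Q') :
    AImp (.par P Q) (.par P' Q') := by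
  obtain ⟨σ₁, h₁⟩ := aimp_lin h1
  obtain ⟨σ₂, h₂⟩ := aimp_lin h2
  set p := (tAA P 0).2 with hp
  set q := (tAA Q 0).2 with hq
  set p' := (tAA P' 0).2 with hp'
  set σ : ℕ → Form := fun k =>
    if k < p then (σ₁ k).subst (shv q) else (σ₂ (k - p)).subst (shv (p + p')) with hσ
  apply aimp_of_lin (σ := σ)
  have hw : (tAA (Proc.par P Q) 0).2 = q + p := by
    simp only [tAA]; rw [tAA_snd Q]
  simp only [tAA, Form.subst]
  -- first component
  have G1 : Lin (((tAA P 0).1).subst σ) ((tAA P' (q + p)).1) := by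
    have e : ((tAA P 0).1).subst σ = ((tAA P 0).1).subst (fun k => (σ₁ k).subst (shv q)) := by
      apply Form.subst_congr
      intro k hk
      have := tAA_vars P 0 k hk
      simp only [hσ, if_pos (show k < p from this.2)]
    rw [e]
    have := Lin.subst (shv q) h₁
    rw [Form.subst_subst] at this
    have eR : ((tAA P' p).1).subst (shv q) = (tAA P' (q + p)).1 := by
      rw [subst_shv_tAA, Nat.add_comm p q]
    rwa [eR] at this
  -- second component
  have G2 : Lin (((tAA Q p).1).subst σ) ((tAA Q' (p' + (q + p))).1) := by
    have e1 : (tAA Q p).1 = ((tAA Q 0).1).subst (shv p) := by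
      simpa using tAA_fst_add Q 0 p
    have e : ((tAA Q p).1).subst σ
        = ((tAA Q 0).1).subst (fun k => (σ₂ k).subst (shv (p + p'))) := by
      rw [e1, Form.subst_subst]
      apply Form.subst_congr_all
      intro k
      have : ¬ (k + p < p) := by omega
      simp only [shv, Form.subst, hσ, this, if_false, Nat.add_sub_cancel]
    rw [e]
    have := Lin.subst (shv (p + p')) h₂
    rw [Form.subst_subst] at this
    have eR : ((tAA Q' q).1).subst (shv (p + p')) = (tAA Q' (p' + (q + p))).1 := by
      rw [subst_shv_tAA, show q + (p + p') = p' + (q + p) from by omega]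
    rwa [eR] at this
  rw [show (tAA Q (tAA P 0).2).2 = q + p from by rw [tAA_snd Q]]
  rw [show (tAA P' (q + p)).2 = p' + (q + p) from by rw [tAA_snd P']]
  exact Lin.tens G1 G2

theorem aimp_act {P Q : Proc} (b : Bool) (a ℓ : ℕ) (h : AImp P Q) :
    AImp (.act b a ℓ P) (.act b a ℓ Q) := by
  obtain ⟨σ, hσ⟩ := aimp_lin h
  set p := (tAA P 0).2 with hp
  set w := (tAA P 1).2 with hw
  have hw' : w = p + 1 := by rw [hw, tAA_snd]
  set σ' : ℕ → Form := fun k =>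
    if k = 0 then .pv w else (σ (k - 1)).subst (shv 2) with hσ'
  have core : Lin (((tAA P 1).1).subst σ') ((tAA Q (w + 1)).1) := by
    have e1 : (tAA P 1).1 = ((tAA P 0).1).subst (shv 1) := by
      simpa using tAA_fst_add P 0 1
    have e : ((tAA P 1).1).subst σ'
        = ((tAA P 0).1).subst (fun k => (σ k).subst (shv 2)) := by
      rw [e1, Form.subst_subst]
      apply Form.subst_congr_all
      intro k
      simp only [shv, Form.subst, hσ', Nat.add_sub_cancel]
      rw [if_neg (show ¬ (k + 1 = 0) from by omega)]
    rw [e]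
    have := Lin.subst (shv 2) hσ
    rw [Form.subst_subst] at this
    have eR : ((tAA Q p).1).subst (shv 2) = (tAA Q (w + 1)).1 := by
      rw [subst_shv_tAA, show p + 2 = w + 1 from by omega]
    rwa [eR] at this
  cases b
  · apply aimp_of_lin (σ := σ')
    simp only [tAA, Form.subst]
    have h0 : σ' 0 = .pv w := by simp [hσ']
    rw [h0]
    exact Lin.parr (Lin.tens core (Lin.refl _)) (Lin.refl _)
  · apply aimp_of_lin (σ := σ')
    simp only [tAA, Form.subst]
    have h0 : σ' 0 = .pv w := by simp [hσ']
    rw [h0]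
    exact Lin.parr (Lin.refl _) (Lin.tens core (Lin.refl _))

theorem aimp_comm (P Q : Proc) : AImp (.par P Q) (.par Q P) := by
  set p := (tAA P 0).2 with hp
  set q := (tAA Q 0).2 with hq
  have hw : (tAA Q p).2 = q + p := by rw [tAA_snd Q]
  set w := (tAA Q p).2 with hww
  set σ : ℕ → Form := fun k =>
    if k < p then .pv (k + (q + w)) else .pv (k + q) with hσ
  apply aimp_of_lin (σ := σ)
  simp only [tAA, Form.subst]
  have G1 : Lin (((tAA P 0).1).subst σ) ((tAA P (tAA Q w).2).1) := by
    have e : ((tAA P 0).1).subst σ = (tAA P (0 + (q + w))).1 := by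
      apply subst_tAA_shift
      intro k _ hk2
      simp only [hσ, if_pos (show k < p from hk2)]
    rw [e]
    have : (0 : ℕ) + (q + w) = (tAA Q w).2 := by rw [tAA_snd Q]; omega
    rw [this]
    exact Lin.refl _
  have G2 : Lin (((tAA Q p).1).subst σ) ((tAA Q w).1) := by
    have e : ((tAA Q p).1).subst σ = (tAA Q (p + q)).1 := by
      apply subst_tAA_shift
      intro k hk1 _
      simp only [hσ]
      rw [if_neg (show ¬ k < p from by omega)]
    rw [e]
    have : p + q = w := by omega
    rw [this]
    exact Lin.refl _
  exact Lin.tens_comm G1 G2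

theorem aimp_assoc1 (P Q R : Proc) :
    AImp (.par (.par P Q) R) (.par P (.par Q R)) := by
  set w := (tAA (Proc.par (Proc.par P Q) R) 0).2 with hw
  apply aimp_of_lin (σ := shv w)
  rw [subst_shv_tAA, Nat.zero_add]
  simp only [tAA]
  exact lin_assoc1 _ _ _

theorem aimp_assoc2 (P Q R : Proc) :
    AImp (.par P (.par Q R)) (.par (.par P Q) R) := by
  set w := (tAA (Proc.par P (Proc.par Q R)) 0).2 with hw
  apply aimp_of_lin (σ := shv w)
  rw [subst_shv_tAA, Nat.zero_add]
  simp only [tAA]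
  exact lin_assoc2 _ _ _

theorem aimp_unit1 (P : Proc) : AImp (.par .one P) P := by
  set p := (tAA P 0).2 with hp
  set w := (tAA P 1).2 with hw
  have hw' : w = p + 1 := by rw [hw, tAA_snd]
  set Y := (tAA P w).1 with hY
  set σ : ℕ → Form := fun k => if k = 0 then Y.dual else .pv (k + p) with hσ
  apply aimp_of_lin (σ := σ)
  simp only [tAA, Form.subst]
  have h0 : σ 0 = Y.dual := by simp [hσ]
  have e : ((tAA P 1).1).subst σ = Y := by
    rw [hY]
    have : ((tAA P 1).1).subst σ = (tAA P (1 + p)).1 := by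
      apply subst_tAA_shift
      intro k hk1 _
      simp only [hσ]
      rw [if_neg (show ¬ k = 0 from by omega)]
    rw [this, show (1 : ℕ) + p = w from by omega]
  rw [h0, e, Form.dual_dual]
  exact lin_unit1 Y

theorem aimp_unit2 (P : Proc) : AImp P (.par .one P) := by
  set p := (tAA P 0).2 with hp
  apply aimp_of_lin (σ := shv (p + 1))
  rw [subst_shv_tAA, Nat.zero_add]
  simp only [tAA]
  exact lin_unit2 p _
theorem aimp_sync (a ℓ m : ℕ) (P Q R : Proc) :
    AImp (.par (.act true a ℓ P) (.par (.act false a m Q) R)) (.par P (.par Q R)) := by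
  have hp1 : (tAA P 1).2 = (tAA P 0).2 + 1 := tAA_snd P 1
  set p := (tAA P 0).2 with hpd
  set q := (tAA Q 0).2 with hqd
  set r := (tAA R 0).2 with hrd
  have hq2 : (tAA Q (p + 1 + 1)).2 = q + (p + 1 + 1) := tAA_snd Q _
  have hr2 : (tAA R (q + (p + 1 + 1))).2 = r + (q + (p + 1 + 1)) := tAA_snd R _
  set w := r + (q + (p + 1 + 1)) with hww
  set X := (tAA P w).1 with hX
  set σ : ℕ → Form := fun k =>
    if k = 0 ∨ k = p + 1 then X.dual
    else if k < p + 1 then .pv (k + (w - 1)) else .pv (k + (w - 2)) with hσ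
  apply aimp_of_lin (σ := σ)
  simp only [tAA, Form.subst]
  rw [hp1, hq2, hr2]
  rw [show (tAA P w).2 = p + w from tAA_snd P w]
  rw [show (tAA Q (p + w)).2 = q + (p + w) from tAA_snd Q _]
  have hXe : ((tAA P 1).1).subst σ = X := by
    have e : ((tAA P 1).1).subst σ = (tAA P (1 + (w - 1))).1 := by
      apply subst_tAA_shift
      intro k hk1 hk2
      simp only [hσ]
      rw [if_neg (show ¬ (k = 0 ∨ k = p + 1) from by omega),
        if_pos (show k < p + 1 from by omega)]
    rw [e, show 1 + (w - 1) = w from by omega]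
  have hYe : ((tAA Q (p + 1 + 1)).1).subst σ = (tAA Q (p + w)).1 := by
    have e : ((tAA Q (p + 1 + 1)).1).subst σ = (tAA Q ((p + 1 + 1) + (w - 2))).1 := by
      apply subst_tAA_shift
      intro k hk1 hk2
      simp only [hσ]
      rw [if_neg (show ¬ (k = 0 ∨ k = p + 1) from by omega),
        if_neg (show ¬ k < p + 1 from by omega)]
    rw [e, show (p + 1 + 1) + (w - 2) = p + w from by omega]
  have hZe : ((tAA R (q + (p + 1 + 1))).1).subst σ = (tAA R (q + (p + w))).1 := by
    have e : ((tAA R (q + (p + 1 + 1))).1).subst σ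
        = (tAA R ((q + (p + 1 + 1)) + (w - 2))).1 := by
      apply subst_tAA_shift
      intro k hk1 hk2
      simp only [hσ]
      rw [if_neg (show ¬ (k = 0 ∨ k = p + 1) from by omega),
        if_neg (show ¬ k < p + 1 from by omega)]
    rw [e, show (q + (p + 1 + 1)) + (w - 2) = q + (p + w) from by omega]
  have hσ0 : σ 0 = X.dual := by simp [hσ]
  have hσp1 : σ (p + 1) = X.dual := by simp [hσ]
  rw [hXe, hYe, hZe, hσ0, hσp1, Form.dual_dual]
  exact lin_sync a X ((tAA Q (p + w)).1) ((tAA R (q + (p + w))).1)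

theorem sc_aimp {P Q : Proc} (h : SC P Q) : AImp P Q ∧ AImp Q P := by
  induction h with
  | refl P => exact ⟨aimp_refl P, aimp_refl P⟩
  | symm _ ih => exact ⟨ih.2, ih.1⟩
  | trans _ _ ih1 ih2 => exact ⟨aimp_trans ih1.1 ih2.1, aimp_trans ih2.2 ih1.2⟩
  | parComm P Q => exact ⟨aimp_comm P Q, aimp_comm Q P⟩
  | parAssoc P Q R => exact ⟨aimp_assoc1 P Q R, aimp_assoc2 P Q R⟩
  | parUnit P => exact ⟨aimp_unit1 P, aimp_unit2 P⟩
  | parCong _ _ ih1 ih2 => exact ⟨aimp_par ih1.1 ih2.1, aimp_par ih1.2 ih2.2⟩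
  | actCong b a ℓ _ ih => exact ⟨aimp_act b a ℓ ih.1, aimp_act b a ℓ ih.2⟩

theorem step_aimp {P : Proc} {p : ℕ × ℕ} {Q : Proc} (h : Step P p Q) : AImp P Q := by
  obtain ⟨a, P₁, Q₁, R, h1, h2⟩ := h
  exact aimp_trans (sc_aimp h1).1 (aimp_trans (aimp_sync a p.1 p.2 P₁ Q₁ R) (sc_aimp h2).2)

/-- the asynchronous relation `⇒` (= `AImp`) is reflexive,
transitive, contains one-step execution, and is closed under prefixing. -/
theorem aimp_properties :
    (∀ P : Proc, AImp P P) ∧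
    (∀ P Q R : Proc, AImp P Q → AImp Q R → AImp P R) ∧
    (∀ (P Q : Proc) (p : ℕ × ℕ), Step P p Q → AImp P Q) ∧
    (∀ (P Q : Proc) (b : Bool) (a ℓ : ℕ), AImp P Q →
      AImp (.act b a ℓ P) (.act b a ℓ Q)) :=
  ⟨aimp_refl, fun _ _ _ h1 h2 => aimp_trans h1 h2,
    fun _ _ _ h => step_aimp h, fun _ _ b a ℓ h => aimp_act b a ℓ h⟩
end

section
/- For any MCCS term P, the extracted term of its own (synchronous) proof assignment is P itself: P | ⟦P⟧ₛ ≡ P, where ⟦P⟧ₛ is the unique cut-free proof of ⌈P⌉ₛ with modality links labelled by the corresponding prefix locations. -/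
/-- Abstract data of an MLLa proof structure: its located modality links
(with subjects and polarities) and its proof order `<_π`. -/
structure PStruct : Type 1 where
  locs : Finset ℕ
  subj : ℕ → ℕ
  pol : ℕ → Bool
  ord : ℕ → ℕ → Prop

/-- Compatibility of a proof structure with a term: locations of `π` among
those of `P`, matching subjects and polarities, and `<_P ⊆ <_π`. -/
def Compatible (P : Proc) (π : PStruct) : Prop :=
  (↑π.locs : Set ℕ) ⊆ ↑P.locs ∧
  (∀ ℓ ∈ π.locs, P.subj ℓ = some (π.subj ℓ) ∧ P.pol ℓ = some (π.pol ℓ)) ∧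
  (∀ ℓ m, ℓ ∈ π.locs → m ∈ π.locs → P.plt ℓ m → π.ord ℓ m)

/-- `Extracts P π Q` : `Q` is the term `P|π` extracted from `π` knowing `P`:
it has locations `Locs π`, subjects and polarities as in `P`, and action order
`<_P` restricted to `Locs π`. -/
def Extracts (P : Proc) (π : PStruct) (Q : Proc) : Prop :=
  Q.locs = π.locs ∧
  (∀ ℓ ∈ Q.locs, Q.subj ℓ = P.subj ℓ ∧ Q.pol ℓ = P.pol ℓ) ∧
  (∀ ℓ m, Q.plt ℓ m ↔ (ℓ ∈ π.locs ∧ m ∈ π.locs ∧ P.plt ℓ m))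

/-- A cut-elimination step on (the abstract data of) proof structures,
labelled by `some (ℓ, m)` for the elimination of a cut between dual modality
links at locations `ℓ` (positive) and `m` (negative), and by `none` for
multiplicative and axiom eliminations. -/
inductive CutStep : PStruct → Option (ℕ × ℕ) → PStruct → Prop where
  | modal (π π' : PStruct) (ℓ m : ℕ)
      (hl : ℓ ∈ π.locs) (hm : m ∈ π.locs) (hne : ℓ ≠ m)
      (hpl : π.pol ℓ = true) (hpm : π.pol m = false)
      (hs : π.subj ℓ = π.subj m)
      (hminl : ∀ x ∈ π.locs, ¬ π.ord x ℓ) (hminm : ∀ x ∈ π.locs, ¬ π.ord x m)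
      (hlocs : π'.locs = π.locs \ {ℓ, m})
      (hsubj : ∀ x ∈ π'.locs, π'.subj x = π.subj x)
      (hpol : ∀ x ∈ π'.locs, π'.pol x = π.pol x)
      (hord : ∀ x y, π'.ord x y ↔ (x ∈ π'.locs ∧ y ∈ π'.locs ∧ π.ord x y)) :
      CutStep π (some (ℓ, m)) π'
  | other (π π' : PStruct)
      (hlocs : π'.locs = π.locs)
      (hsubj : ∀ x ∈ π'.locs, π'.subj x = π.subj x)
      (hpol : ∀ x ∈ π'.locs, π'.pol x = π.pol x)
      (hord : ∀ x y, π.ord x y → π'.ord x y) :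
      CutStep π none π'

/-! ### Auxiliary lemmas for Statement 19 -/

section Aux

namespace Proc

lemma plt_mem {P : Proc} {ℓ m : ℕ} (h : P.plt ℓ m) :
    ℓ ∈ P.locList ∧ m ∈ P.locList := by
  induction h with
  | parL _ ih =>
      exact ⟨List.mem_append_left _ ih.1, List.mem_append_left _ ih.2⟩
  | parR _ ih =>
      exact ⟨List.mem_append_right _ ih.1, List.mem_append_right _ ih.2⟩
  | here hm =>
      exact ⟨List.mem_cons_self, List.mem_cons_of_mem _ (List.mem_toFinset.mp hm)⟩
  | under _ ih =>
      exact ⟨List.mem_cons_of_mem _ ih.1, List.mem_cons_of_mem _ ih.2⟩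

lemma subj_eq_none_iff {P : Proc} {ℓ : ℕ} : P.subj ℓ = none ↔ ℓ ∉ P.locList := by
  induction P with
  | one => simp [subj, locList]
  | par P Q ihP ihQ =>
      cases h : P.subj ℓ <;>
        simp_all [subj, locList, Option.orElse]
  | act b a m P ih =>
      by_cases h : ℓ = m <;> simp_all [subj, locList]

lemma pol_eq_none_iff {P : Proc} {ℓ : ℕ} : P.pol ℓ = none ↔ ℓ ∉ P.locList := by
  induction P with
  | one => simp [pol, locList]
  | par P Q ihP ihQ =>
      cases h : P.pol ℓ <;>
        simp_all [pol, locList, Option.orElse]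
  | act b a m P ih =>
      by_cases h : ℓ = m <;> simp_all [pol, locList]

end Proc

lemma SC.permList {P Q : Proc} (h : SC P Q) : P.locList.Perm Q.locList := by
  induction h with
  | refl => exact .refl _
  | symm _ ih => exact ih.symm
  | trans _ _ ih1 ih2 => exact ih1.trans ih2
  | parComm P Q => exact List.perm_append_comm
  | parAssoc P Q R => rw [Proc.locList, Proc.locList, Proc.locList, Proc.locList,
      List.append_assoc]
  | parUnit P => simp [Proc.locList]
  | parCong _ _ ih1 ih2 => exact ih1.append ih2
  | actCong b a ℓ _ ih => exact ih.cons _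

lemma SC.wf {P Q : Proc} (h : SC P Q) (hP : P.WF) : Q.WF :=
  h.permList.nodup_iff.mp hP

lemma SC.mem_iff {P Q : Proc} (h : SC P Q) {ℓ : ℕ} :
    ℓ ∈ P.locList ↔ ℓ ∈ Q.locList := h.permList.mem_iff

private lemma orElse_comm {α : Type*} {a b : Option α} (h : ¬ (a ≠ none ∧ b ≠ none)) :
    (a.orElse fun _ => b) = (b.orElse fun _ => a) := by
  cases a <;> cases b <;> simp_all [Option.orElse]

lemma SC.subj_eq {P Q : Proc} (h : SC P Q) (hP : P.WF) (ℓ : ℕ) :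
    P.subj ℓ = Q.subj ℓ := by
  induction h with
  | refl => rfl
  | symm h ih => exact (ih (h.symm.wf hP)).symm
  | trans h1 h2 ih1 ih2 => exact (ih1 hP).trans (ih2 (h1.wf hP))
  | parComm P Q =>
      rw [Proc.WF, Proc.locList, List.nodup_append'] at hP
      refine orElse_comm ?_
      rintro ⟨h1, h2⟩
      rw [Ne, Proc.subj_eq_none_iff, not_not] at h1 h2
      exact hP.2.2 h1 h2
  | parAssoc P Q R =>
      show (((P.subj ℓ).orElse _).orElse _) = (P.subj ℓ).orElse _
      cases P.subj ℓ <;> rfl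
  | parUnit P => rfl
  | parCong h1 h2 ih1 ih2 =>
      rw [Proc.WF, Proc.locList, List.nodup_append] at hP
      show ((_ : Option ℕ).orElse _) = (_ : Option ℕ).orElse _
      rw [ih1 hP.1, ih2 hP.2.1]
  | actCong b a m h1 ih =>
      rw [Proc.WF, Proc.locList, List.nodup_cons] at hP
      show (if ℓ = m then _ else _) = (if ℓ = m then _ else _)
      rw [ih hP.2]

lemma SC.pol_eq {P Q : Proc} (h : SC P Q) (hP : P.WF) (ℓ : ℕ) :
    P.pol ℓ = Q.pol ℓ := by
  induction h with
  | refl => rfl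
  | symm h ih => exact (ih (h.symm.wf hP)).symm
  | trans h1 h2 ih1 ih2 => exact (ih1 hP).trans (ih2 (h1.wf hP))
  | parComm P Q =>
      rw [Proc.WF, Proc.locList, List.nodup_append'] at hP
      refine orElse_comm ?_
      rintro ⟨h1, h2⟩
      rw [Ne, Proc.pol_eq_none_iff, not_not] at h1 h2
      exact hP.2.2 h1 h2
  | parAssoc P Q R =>
      show (((P.pol ℓ).orElse _).orElse _) = (P.pol ℓ).orElse _
      cases P.pol ℓ <;> rfl
  | parUnit P => rfl
  | parCong h1 h2 ih1 ih2 =>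
      rw [Proc.WF, Proc.locList, List.nodup_append] at hP
      show ((_ : Option Bool).orElse _) = (_ : Option Bool).orElse _
      rw [ih1 hP.1, ih2 hP.2.1]
  | actCong b a m h1 ih =>
      rw [Proc.WF, Proc.locList, List.nodup_cons] at hP
      show (if ℓ = m then _ else _) = (if ℓ = m then _ else _)
      rw [ih hP.2]

lemma SC.plt_iff {P Q : Proc} (h : SC P Q) (ℓ m : ℕ) :
    P.plt ℓ m ↔ Q.plt ℓ m := by
  induction h with
  | refl => rfl
  | symm _ ih => exact ih.symm
  | trans _ _ ih1 ih2 => exact ih1.trans ih2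
  | parComm P Q =>
      constructor <;> rintro (h | h)
      exacts [.parR h, .parL h, .parR h, .parL h]
  | parAssoc P Q R =>
      constructor
      · rintro ((h | h) | h)
        exacts [.parL h, .parR (.parL h), .parR (.parR h)]
      · rintro (h | (h | h))
        exacts [.parL (.parL h), .parL (.parR h), .parR h]
  | parUnit P =>
      constructor
      · rintro (h | h)
        · cases h
        · exact h
      · exact .parR
  | parCong _ _ ih1 ih2 =>
      constructor <;> rintro (h | h)
      exacts [.parL (ih1.mp h), .parR (ih2.mp h),
        .parL (ih1.mpr h), .parR (ih2.mpr h)]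
  | actCong b a n h1 ih =>
      constructor <;> intro h2
      · cases h2 with
        | here hm =>
            exact .here (by
              rw [Proc.locs, List.mem_toFinset] at hm ⊢
              exact h1.permList.mem_iff.mp hm)
        | under h => exact .under (ih.mp h)
      · cases h2 with
        | here hm =>
            exact .here (by
              rw [Proc.locs, List.mem_toFinset] at hm ⊢
              exact h1.permList.mem_iff.mpr hm)
        | under h => exact .under (ih.mpr h)

lemma SC_of_locList_nil {P : Proc} (h : P.locList = []) : SC P .one := by
  induction P with
  | one => exact .refl _
  | par P Q ihP ihQ =>
      rw [Proc.locList, List.append_eq_nil_iff] at h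
      exact .trans (.parCong (ihP h.1) (ihQ h.2)) (.parUnit _)
  | act b a m P ih => simp [Proc.locList] at h

lemma exists_min (P : Proc) (hP : P.WF) (hne : P.locList ≠ []) :
    ∃ ℓ ∈ P.locList, ∀ m, ¬ P.plt m ℓ := by
  induction P with
  | one => simp [Proc.locList] at hne
  | par P Q ihP ihQ =>
      rw [Proc.WF, Proc.locList, List.nodup_append'] at hP
      by_cases hp : P.locList = []
      · rw [Proc.locList, hp, List.nil_append] at hne
        obtain ⟨ℓ, hmem, hmin⟩ := ihQ hP.2.1 hne
        refine ⟨ℓ, List.mem_append_right _ hmem, fun m hm => ?_⟩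
        cases hm with
        | parL h => exact hP.2.2 (Proc.plt_mem h).2 hmem
        | parR h => exact hmin m h
      · obtain ⟨ℓ, hmem, hmin⟩ := ihP hP.1 hp
        refine ⟨ℓ, List.mem_append_left _ hmem, fun m hm => ?_⟩
        cases hm with
        | parL h => exact hmin m h
        | parR h => exact hP.2.2 hmem (Proc.plt_mem h).2
  | act b a m P ih =>
      rw [Proc.WF, Proc.locList, List.nodup_cons] at hP
      refine ⟨m, List.mem_cons_self, fun k hk => ?_⟩
      cases hk with
      | here hm => exact hP.1 (List.mem_toFinset.mp hm)
      | under h => exact hP.1 (Proc.plt_mem h).2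

lemma extract_min (P : Proc) {ℓ : ℕ} (hmem : ℓ ∈ P.locList)
    (hmin : ∀ m, ¬ P.plt m ℓ) :
    ∃ b a P₁ R, SC P (.par (.act b a ℓ P₁) R) := by
  induction P with
  | one => simp [Proc.locList] at hmem
  | par P Q ihP ihQ =>
      rw [Proc.locList, List.mem_append] at hmem
      rcases hmem with hmem | hmem
      · obtain ⟨b, a, P₁, R, hsc⟩ := ihP hmem (fun m hm => hmin m (.parL hm))
        exact ⟨b, a, P₁, .par R Q,
          .trans (.parCong hsc (.refl Q)) (.parAssoc _ _ _)⟩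
      · obtain ⟨b, a, P₁, R, hsc⟩ := ihQ hmem (fun m hm => hmin m (.parR hm))
        exact ⟨b, a, P₁, .par R P,
          .trans (.parComm _ _) (.trans (.parCong hsc (.refl P)) (.parAssoc _ _ _))⟩
  | act b a m P ih =>
      rw [Proc.locList, List.mem_cons] at hmem
      rcases hmem with rfl | hmem
      · exact ⟨b, a, P, .one,
          .symm (.trans (.parComm _ _) (.parUnit _))⟩
      · exact absurd (.here (List.mem_toFinset.mpr hmem)) (hmin m)

lemma SC_of_data : ∀ (n : ℕ) (P Q : Proc), P.locList.length ≤ n → P.WF → Q.WF →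
    (∀ ℓ, ℓ ∈ P.locList ↔ ℓ ∈ Q.locList) →
    (∀ ℓ, ℓ ∈ P.locList → P.subj ℓ = Q.subj ℓ ∧ P.pol ℓ = Q.pol ℓ) →
    (∀ ℓ m, P.plt ℓ m ↔ Q.plt ℓ m) → SC P Q := by
  intro n
  induction n with
  | zero =>
      intro P Q hlen hP hQ hmem hsp hplt
      have hnil : P.locList = [] := List.eq_nil_of_length_eq_zero (Nat.le_antisymm hlen (Nat.zero_le _))
      have hnilQ : Q.locList = [] := by
        rcases hq : Q.locList with _ | ⟨x, l⟩
        · rfl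
        · exact absurd ((hmem x).mpr (hq ▸ List.mem_cons_self)) (by simp [hnil])
      exact .trans (SC_of_locList_nil hnil) (.symm (SC_of_locList_nil hnilQ))
  | succ n ih =>
      intro P Q hlen hP hQ hmem hsp hplt
      by_cases hnil : P.locList = []
      · have hnilQ : Q.locList = [] := by
          rcases hq : Q.locList with _ | ⟨x, l⟩
          · rfl
          · exact absurd ((hmem x).mpr (hq ▸ List.mem_cons_self)) (by simp [hnil])
        exact .trans (SC_of_locList_nil hnil) (.symm (SC_of_locList_nil hnilQ))
      obtain ⟨ℓ, hℓP, hminP⟩ := exists_min P hP hnil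
      have hℓQ : ℓ ∈ Q.locList := (hmem ℓ).mp hℓP
      have hminQ : ∀ m, ¬ Q.plt m ℓ := fun m hm => hminP m ((hplt m ℓ).mpr hm)
      obtain ⟨b, a, P₁, R, hsc⟩ := extract_min P hℓP hminP
      obtain ⟨b', a', Q₁, S, hscQ⟩ := extract_min Q hℓQ hminQ
      have hP' := hsc.wf hP
      rw [Proc.WF, Proc.locList, Proc.locList, List.nodup_append', List.nodup_cons] at hP'
      obtain ⟨⟨hℓP₁, hndP₁⟩, hndR, hdisj⟩ := hP'
      have hQ' := hscQ.wf hQ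
      rw [Proc.WF, Proc.locList, Proc.locList, List.nodup_append', List.nodup_cons] at hQ'
      obtain ⟨⟨hℓQ₁, hndQ₁⟩, hndS, hdisjQ⟩ := hQ'
      -- subjects and polarities at ℓ agree, so a' = a, b' = b
      have hsa : P.subj ℓ = some a := by
        rw [hsc.subj_eq hP ℓ]; simp [Proc.subj, Option.orElse]
      have hsa' : Q.subj ℓ = some a' := by
        rw [hscQ.subj_eq hQ ℓ]; simp [Proc.subj, Option.orElse]
      have hpb : P.pol ℓ = some b := by
        rw [hsc.pol_eq hP ℓ]; simp [Proc.pol, Option.orElse]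
      have hpb' : Q.pol ℓ = some b' := by
        rw [hscQ.pol_eq hQ ℓ]; simp [Proc.pol, Option.orElse]
      obtain rfl : a = a' := by
        have := (hsp ℓ hℓP).1; rw [hsa, hsa'] at this; exact Option.some.inj this
      obtain rfl : b = b' := by
        have := (hsp ℓ hℓP).2; rw [hpb, hpb'] at this; exact Option.some.inj this
      -- membership characterisations
      have hP1mem : ∀ m, m ∈ P₁.locList ↔ P.plt ℓ m := by
        intro m
        rw [hsc.plt_iff ℓ m]
        constructor
        · intro hm; exact .parL (.here (List.mem_toFinset.mpr hm))
        · intro hm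
          cases hm with
          | parL h =>
              cases h with
              | here hm' => exact List.mem_toFinset.mp hm'
              | under h => exact absurd (Proc.plt_mem h).1 hℓP₁
          | parR h => exact absurd (Proc.plt_mem h).1 (hdisj (List.mem_cons_self))
      have hQ1mem : ∀ m, m ∈ Q₁.locList ↔ Q.plt ℓ m := by
        intro m
        rw [hscQ.plt_iff ℓ m]
        constructor
        · intro hm; exact .parL (.here (List.mem_toFinset.mpr hm))
        · intro hm
          cases hm with
          | parL h =>
              cases h with
              | here hm' => exact List.mem_toFinset.mp hm'
              | under h => exact absurd (Proc.plt_mem h).1 hℓQ₁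
          | parR h => exact absurd (Proc.plt_mem h).1 (hdisjQ (List.mem_cons_self))
      have hmem1 : ∀ m, m ∈ P₁.locList ↔ m ∈ Q₁.locList := by
        intro m; rw [hP1mem, hQ1mem, hplt]
      have hPdec : ∀ m, m ∈ P.locList ↔ m = ℓ ∨ m ∈ P₁.locList ∨ m ∈ R.locList := by
        intro m; rw [hsc.permList.mem_iff]; simp [Proc.locList]
      have hQdec : ∀ m, m ∈ Q.locList ↔ m = ℓ ∨ m ∈ Q₁.locList ∨ m ∈ S.locList := by
        intro m; rw [hscQ.permList.mem_iff]; simp [Proc.locList]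
      have hRmem : ∀ m, m ∈ R.locList ↔ (m ∈ P.locList ∧ m ≠ ℓ ∧ m ∉ P₁.locList) := by
        intro m
        constructor
        · intro hm
          refine ⟨(hPdec m).mpr (Or.inr (Or.inr hm)), ?_, ?_⟩
          · rintro rfl; exact hdisj (List.mem_cons_self) hm
          · intro h1; exact hdisj (List.mem_cons_of_mem _ h1) hm
        · rintro ⟨h1, h2, h3⟩
          rcases (hPdec m).mp h1 with rfl | h | h
          · exact absurd rfl h2
          · exact absurd h h3
          · exact h
      have hSmem : ∀ m, m ∈ S.locList ↔ (m ∈ Q.locList ∧ m ≠ ℓ ∧ m ∉ Q₁.locList) := by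
        intro m
        constructor
        · intro hm
          refine ⟨(hQdec m).mpr (Or.inr (Or.inr hm)), ?_, ?_⟩
          · rintro rfl; exact hdisjQ (List.mem_cons_self) hm
          · intro h1; exact hdisjQ (List.mem_cons_of_mem _ h1) hm
        · rintro ⟨h1, h2, h3⟩
          rcases (hQdec m).mp h1 with rfl | h | h
          · exact absurd rfl h2
          · exact absurd h h3
          · exact h
      have hmem2 : ∀ m, m ∈ R.locList ↔ m ∈ S.locList := by
        intro m; rw [hRmem, hSmem, hmem, hmem1]
      -- subjects/polarities transfer
      have keyP1 : ∀ m ∈ P₁.locList, P₁.subj m = P.subj m ∧ P₁.pol m = P.pol m := by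
        intro m hm
        have hne : m ≠ ℓ := fun e => hℓP₁ (e ▸ hm)
        obtain ⟨v, hv⟩ := Option.ne_none_iff_exists'.mp
          (fun e => (Proc.subj_eq_none_iff.mp e) hm : P₁.subj m ≠ none)
        obtain ⟨w, hw⟩ := Option.ne_none_iff_exists'.mp
          (fun e => (Proc.pol_eq_none_iff.mp e) hm : P₁.pol m ≠ none)
        rw [hsc.subj_eq hP m, hsc.pol_eq hP m]
        constructor
        · simp [Proc.subj, hne, hv, Option.orElse]
        · simp [Proc.pol, hne, hw, Option.orElse]
      have keyQ1 : ∀ m ∈ Q₁.locList, Q₁.subj m = Q.subj m ∧ Q₁.pol m = Q.pol m := by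
        intro m hm
        have hne : m ≠ ℓ := fun e => hℓQ₁ (e ▸ hm)
        obtain ⟨v, hv⟩ := Option.ne_none_iff_exists'.mp
          (fun e => (Proc.subj_eq_none_iff.mp e) hm : Q₁.subj m ≠ none)
        obtain ⟨w, hw⟩ := Option.ne_none_iff_exists'.mp
          (fun e => (Proc.pol_eq_none_iff.mp e) hm : Q₁.pol m ≠ none)
        rw [hscQ.subj_eq hQ m, hscQ.pol_eq hQ m]
        constructor
        · simp [Proc.subj, hne, hv, Option.orElse]
        · simp [Proc.pol, hne, hw, Option.orElse]
      have keyR : ∀ m ∈ R.locList, R.subj m = P.subj m ∧ R.pol m = P.pol m := by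
        intro m hm
        obtain ⟨_, hne, hnm⟩ := (hRmem m).mp hm
        have h0 : P₁.subj m = none := Proc.subj_eq_none_iff.mpr hnm
        have h1 : P₁.pol m = none := Proc.pol_eq_none_iff.mpr hnm
        rw [hsc.subj_eq hP m, hsc.pol_eq hP m]
        constructor
        · simp [Proc.subj, hne, h0, Option.orElse]
        · simp [Proc.pol, hne, h1, Option.orElse]
      have keyS : ∀ m ∈ S.locList, S.subj m = Q.subj m ∧ S.pol m = Q.pol m := by
        intro m hm
        obtain ⟨_, hne, hnm⟩ := (hSmem m).mp hm
        have h0 : Q₁.subj m = none := Proc.subj_eq_none_iff.mpr hnm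
        have h1 : Q₁.pol m = none := Proc.pol_eq_none_iff.mpr hnm
        rw [hscQ.subj_eq hQ m, hscQ.pol_eq hQ m]
        constructor
        · simp [Proc.subj, hne, h0, Option.orElse]
        · simp [Proc.pol, hne, h1, Option.orElse]
      -- plt characterisations
      have hpltP1 : ∀ x y, P₁.plt x y ↔ (x ∈ P₁.locList ∧ P.plt x y) := by
        intro x y
        rw [hsc.plt_iff x y]
        constructor
        · intro h; exact ⟨(Proc.plt_mem h).1, .parL (.under h)⟩
        · rintro ⟨hx, h⟩
          cases h with
          | parL h =>
              cases h with
              | here hm' => exact absurd hx hℓP₁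
              | under h => exact h
          | parR h =>
              exact absurd (Proc.plt_mem h).1 (hdisj (List.mem_cons_of_mem _ hx))
      have hpltQ1 : ∀ x y, Q₁.plt x y ↔ (x ∈ Q₁.locList ∧ Q.plt x y) := by
        intro x y
        rw [hscQ.plt_iff x y]
        constructor
        · intro h; exact ⟨(Proc.plt_mem h).1, .parL (.under h)⟩
        · rintro ⟨hx, h⟩
          cases h with
          | parL h =>
              cases h with
              | here hm' => exact absurd hx hℓQ₁
              | under h => exact h
          | parR h =>
              exact absurd (Proc.plt_mem h).1 (hdisjQ (List.mem_cons_of_mem _ hx))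
      have hpltR : ∀ x y, R.plt x y ↔ (x ∈ R.locList ∧ P.plt x y) := by
        intro x y
        rw [hsc.plt_iff x y]
        constructor
        · intro h; exact ⟨(Proc.plt_mem h).1, .parR h⟩
        · rintro ⟨hx, h⟩
          cases h with
          | parL h =>
              cases h with
              | here hm' => exact absurd hx (hdisj (List.mem_cons_self))
              | under h =>
                  exact absurd hx (fun hx' =>
                    hdisj (List.mem_cons_of_mem _ (Proc.plt_mem h).1) hx')
          | parR h => exact h
      have hpltS : ∀ x y, S.plt x y ↔ (x ∈ S.locList ∧ Q.plt x y) := by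
        intro x y
        rw [hscQ.plt_iff x y]
        constructor
        · intro h; exact ⟨(Proc.plt_mem h).1, .parR h⟩
        · rintro ⟨hx, h⟩
          cases h with
          | parL h =>
              cases h with
              | here hm' => exact absurd hx (hdisjQ (List.mem_cons_self))
              | under h =>
                  exact absurd hx (fun hx' =>
                    hdisjQ (List.mem_cons_of_mem _ (Proc.plt_mem h).1) hx')
          | parR h => exact h
      -- lengths
      have hlen' : P₁.locList.length + R.locList.length + 1 ≤ n + 1 := by
        have := hsc.permList.length_eq
        simp only [Proc.locList, List.length_append, List.length_cons] at this
        omega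
      -- recursive calls
      have hmemP1P : ∀ m ∈ P₁.locList, m ∈ P.locList := fun m hm =>
        (Proc.plt_mem ((hP1mem m).mp hm)).2
      have hmemRP : ∀ m ∈ R.locList, m ∈ P.locList := fun m hm => ((hRmem m).mp hm).1
      have sc1 : SC P₁ Q₁ := by
        refine ih P₁ Q₁ (by omega) hndP₁ hndQ₁ hmem1 ?_ ?_
        · intro m hm
          have hm' := (hmem1 m).mp hm
          have h1 := keyP1 m hm
          have h2 := keyQ1 m hm'
          have h3 := hsp m (hmemP1P m hm)
          exact ⟨h1.1.trans (h3.1.trans h2.1.symm), h1.2.trans (h3.2.trans h2.2.symm)⟩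
        · intro x y
          rw [hpltP1, hpltQ1, hmem1, hplt]
      have sc2 : SC R S := by
        refine ih R S (by omega) hndR hndS hmem2 ?_ ?_
        · intro m hm
          have hm' := (hmem2 m).mp hm
          have h1 := keyR m hm
          have h2 := keyS m hm'
          have h3 := hsp m (hmemRP m hm)
          exact ⟨h1.1.trans (h3.1.trans h2.1.symm), h1.2.trans (h3.2.trans h2.2.symm)⟩
        · intro x y
          rw [hpltR, hpltS, hmem2, hplt]
      exact hsc.trans (.trans (.parCong (.actCong b a ℓ sc1) sc2) hscQ.symm)


end Aux

/-- the term extracted from the synchronous proof assignment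
of `P` — whose abstract structure has exactly the locations, subjects,
polarities and action order of `P` — is `P` itself up to `≡`. -/
theorem extract_of_proof_assignment (P : Proc) (hP : P.WF) (Q : Proc)
    (hQ : Q.WF)
    (h : Extracts P
      ⟨P.locs, fun ℓ => (P.subj ℓ).getD 0, fun ℓ => (P.pol ℓ).getD true,
        P.plt⟩ Q) :
    SC Q P := by
  obtain ⟨hlocs, hsp, hplt⟩ := h
  refine SC_of_data Q.locList.length Q P le_rfl hQ hP ?_ ?_ ?_
  · intro ℓ
    rw [← List.mem_toFinset, ← List.mem_toFinset]
    show ℓ ∈ Q.locs ↔ ℓ ∈ P.locs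
    rw [hlocs]
  · intro ℓ hm
    exact hsp ℓ (by simpa [Proc.locs, List.mem_toFinset] using hm)
  · intro ℓ m
    rw [hplt ℓ m]
    constructor
    · rintro ⟨_, _, h⟩; exact h
    · intro h
      obtain ⟨h1, h2⟩ := Proc.plt_mem h
      exact ⟨List.mem_toFinset.mpr h1, List.mem_toFinset.mpr h2, h⟩
end
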